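/- Block matrix inverse trace identity: if X : ℝ^(n×d) has full row rank, x ∈ ℝ^d with Proj_{X⊥}(x) ≠ 0, and X' = [X; xᵀ] is the (n+1)×d matrix obtained by appending x as a new row, then Tr((X'X'ᵀ)⁻¹) = Tr((XXᵀ)⁻¹) + (1 + ‖(XXᵀ)⁻¹Xx‖²)/‖Proj_{X⊥}(x)‖². -/

import Mathlib

open Matrix

private lemma trace_fromBlocks_aux {m k : Type*} [Fintype m] [Fintype k]
    (P : Matrix m m ℝ) (Q : Matrix m k ℝ) (R : Matrix k m ℝ) (S : Matrix k k ℝ) :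
    trace (fromBlocks P Q R S) = trace P + trace S := by
  simp [Matrix.trace, Matrix.diag, Fintype.sum_sum_type]


/-- Appending a row `x` (with nonzero component orthogonal to the rows of `X`) to a
full-row-rank matrix `X` changes the trace of `(XXᵀ)⁻¹` by
`(1 + ‖(XXᵀ)⁻¹Xx‖²)/‖Proj_{X⊥}(x)‖²`. -/
theorem stmt_9 (n d : ℕ) (hnd : n < d) (X : Matrix (Fin n) (Fin d) ℝ)
    (hrank : X.rank = n) (x : Fin d → ℝ)
    (hproj : x - (Xᵀ * (X * Xᵀ)⁻¹ * X) *ᵥ x ≠ 0) :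
    Matrix.trace ((Matrix.of (Fin.snoc X x) * (Matrix.of (Fin.snoc X x))ᵀ)⁻¹ :
        Matrix (Fin (n + 1)) (Fin (n + 1)) ℝ) =
      Matrix.trace (X * Xᵀ)⁻¹ +
        (1 + ∑ i, (((X * Xᵀ)⁻¹ *ᵥ (X *ᵥ x)) i) ^ 2) /
          ∑ j, ((x - (Xᵀ * (X * Xᵀ)⁻¹ * X) *ᵥ x) j) ^ 2 := by
  classical
  set A := X * Xᵀ with hAdef
  -- A is invertible
  have hA : IsUnit A := by
    rw [← Matrix.mulVec_surjective_iff_isUnit]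
    have hr : A.rank = Fintype.card (Fin n) := by
      rw [hAdef, Matrix.rank_self_mul_transpose, hrank, Fintype.card_fin]
    have htop : LinearMap.range A.mulVecLin = ⊤ := by
      apply Submodule.eq_top_of_finrank_eq
      rw [← Matrix.rank, hr, Module.finrank_fintype_fun_eq_card]
    intro v
    obtain ⟨w, hw⟩ := (LinearMap.range_eq_top.mp htop) v
    exact ⟨w, by simpa [Matrix.mulVecLin_apply] using hw⟩
  haveI : Invertible A := hA.nonempty_invertible.some
  have hAmul : A * A⁻¹ = 1 := Matrix.mul_nonsing_inv A ((Matrix.isUnit_iff_isUnit_det A).mp hA)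
  have hAsymm : Aᵀ = A := by rw [hAdef, Matrix.transpose_mul, Matrix.transpose_transpose]
  have hAinvsymm : (A⁻¹)ᵀ = A⁻¹ := by rw [Matrix.transpose_nonsing_inv, hAsymm]
  set b : Fin n → ℝ := X *ᵥ x with hbdef
  set u : Fin n → ℝ := A⁻¹ *ᵥ b with hudef
  set s : ℝ := x ⬝ᵥ x - b ⬝ᵥ u with hsdef
  have hbu : b ᵥ* A⁻¹ = u := by rw [← hAinvsymm, Matrix.vecMul_transpose, hudef]
  -- projection rewriting
  have hp : x - (Xᵀ * A⁻¹ * X) *ᵥ x = x - Xᵀ *ᵥ u := by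
    rw [← Matrix.mulVec_mulVec, ← Matrix.mulVec_mulVec, ← hbdef, ← hudef]
  have hdotq : x ⬝ᵥ (Xᵀ *ᵥ u) = b ⬝ᵥ u := by
    rw [Matrix.dotProduct_mulVec, Matrix.vecMul_transpose, ← hbdef]
  have hqq : (Xᵀ *ᵥ u) ⬝ᵥ (Xᵀ *ᵥ u) = b ⬝ᵥ u := by
    rw [Matrix.dotProduct_mulVec, Matrix.vecMul_transpose, Matrix.mulVec_mulVec, ← hAdef,
      hudef, Matrix.mulVec_mulVec, hAmul, Matrix.one_mulVec]
  -- key: sum of squares of the projection equals s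
  have hsq : ∀ v : Fin d → ℝ, ∑ j, (v j) ^ 2 = v ⬝ᵥ v := by
    intro v; simp [dotProduct, sq]
  have hkey : ∑ j, ((x - (Xᵀ * A⁻¹ * X) *ᵥ x) j) ^ 2 = s := by
    rw [hsq, hp, sub_dotProduct, dotProduct_sub, dotProduct_sub, hdotq,
      hqq, dotProduct_comm (Xᵀ *ᵥ u) x, hdotq, hsdef]
    ring
  have hs_pos : 0 < s := by
    rw [← hkey]
    obtain ⟨j, hj⟩ := Function.ne_iff.mp hproj
    exact Finset.sum_pos' (fun i _ => sq_nonneg _)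
      ⟨j, Finset.mem_univ j, lt_of_le_of_ne (sq_nonneg _) (Ne.symm (pow_ne_zero 2 hj))⟩
  have hs0 : s ≠ 0 := ne_of_gt hs_pos
  -- block matrices
  set B : Matrix (Fin n) (Fin 1) ℝ := Matrix.replicateCol (Fin 1) b with hBdef
  set C : Matrix (Fin 1) (Fin n) ℝ := Matrix.replicateRow (Fin 1) b with hCdef
  set D : Matrix (Fin 1) (Fin 1) ℝ := Matrix.of fun _ _ => x ⬝ᵥ x with hDdef
  set Dm : Matrix (Fin 1) (Fin 1) ℝ := Matrix.of fun _ _ => s with hDmdef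
  have hDm : D - C * A⁻¹ * B = Dm := by
    ext i j
    rw [hCdef, ← Matrix.replicateRow_vecMul, hbu, hBdef]
    simp [hDdef, hDmdef, Matrix.replicateRow_mul_replicateCol_apply, hsdef, dotProduct_comm u b]
  have hDminv : Dm⁻¹ = Matrix.of fun _ _ => s⁻¹ := by
    apply Matrix.inv_eq_right_inv
    ext i j
    simp [hDmdef, Matrix.mul_apply, Fin.eq_zero i, Fin.eq_zero j,
      mul_inv_cancel₀ hs0, Matrix.one_apply]
  haveI hDmI : Invertible Dm := by
    apply Matrix.invertibleOfIsUnitDet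
    rw [Matrix.det_fin_one]
    simpa [hDmdef] using hs0.isUnit
  haveI hSchur : Invertible (D - C * ⅟A * B) := by
    rw [invOf_eq_nonsing_inv, hDm]; exact hDmI
  set F : Matrix (Fin n ⊕ Fin 1) (Fin n ⊕ Fin 1) ℝ := fromBlocks A B C D with hFdef
  haveI iF : Invertible F := Matrix.fromBlocks₁₁Invertible A B C D
  -- inverse of F
  have hFinv : F⁻¹ =
      fromBlocks (A⁻¹ + A⁻¹ * B * Dm⁻¹ * C * A⁻¹) (-(A⁻¹ * B * Dm⁻¹))
        (-(Dm⁻¹ * C * A⁻¹)) Dm⁻¹ := by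
    rw [hFdef, ← invOf_eq_nonsing_inv, Matrix.invOf_fromBlocks₁₁_eq]
    have h1 : ⅟A = A⁻¹ := invOf_eq_nonsing_inv A
    have h2 : ⅟(D - C * ⅟A * B) = Dm⁻¹ := by
      rw [invOf_eq_nonsing_inv, h1, hDm]
    rw [h2, h1]
  -- relating the snoc matrix to F
  set Y : Matrix (Fin n ⊕ Fin 1) (Fin d) ℝ := Matrix.of (Sum.elim X fun _ => x) with hYdef
  have hsnoc : (Matrix.of (Fin.snoc X x) : Matrix (Fin (n+1)) (Fin d) ℝ) =
      Y.submatrix finSumFinEquiv.symm id := by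
    ext i k
    refine Fin.lastCases ?_ ?_ i
    · simp [finSumFinEquiv_symm_last, hYdef, Sum.elim, Fin.snoc]
    · intro j
      have : finSumFinEquiv.symm (Fin.castSucc j) = Sum.inl j :=
        finSumFinEquiv_symm_apply_castAdd j
      simp [this, hYdef, Sum.elim, Fin.snoc]
  have hYY : Y * Yᵀ = F := by
    ext i j
    cases i with
    | inl i =>
      cases j with
      | inl j => simp [hYdef, hFdef, Matrix.mul_apply, hAdef, Sum.elim]
      | inr j =>
        simp [hYdef, hFdef, Matrix.mul_apply, hBdef, Sum.elim, hbdef, Matrix.mulVec,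
          dotProduct]
    | inr i =>
      cases j with
      | inl j =>
        simp [hYdef, hFdef, Matrix.mul_apply, hCdef, Sum.elim, hbdef, Matrix.mulVec,
          dotProduct, mul_comm]
      | inr j =>
        simp [hYdef, hFdef, Matrix.mul_apply, hDdef, dotProduct, Sum.elim]
  have hM : (Matrix.of (Fin.snoc X x) * (Matrix.of (Fin.snoc X x))ᵀ :
      Matrix (Fin (n+1)) (Fin (n+1)) ℝ) = F.submatrix finSumFinEquiv.symm finSumFinEquiv.symm := by
    rw [hsnoc, Matrix.transpose_submatrix, ← Matrix.submatrix_mul _ _ _ _ _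
      Function.bijective_id, hYY]
  rw [hM, Matrix.inv_submatrix_equiv]
  have htr : Matrix.trace (F⁻¹.submatrix finSumFinEquiv.symm finSumFinEquiv.symm) =
      Matrix.trace F⁻¹ :=
    Fintype.sum_equiv finSumFinEquiv.symm _ _ (fun i => rfl)
  rw [htr, hFinv, trace_fromBlocks_aux, Matrix.trace_add]
  -- compute the correction traces
  have hAB : A⁻¹ * B = Matrix.replicateCol (Fin 1) u := by
    rw [hBdef, ← Matrix.replicateCol_mulVec, hudef]
  have hCAi : C * A⁻¹ = Matrix.replicateRow (Fin 1) u := by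
    rw [hCdef, ← Matrix.replicateRow_vecMul, hbu]
  have htr2 : Matrix.trace (A⁻¹ * B * Dm⁻¹ * C * A⁻¹) = s⁻¹ * ∑ i, (u i) ^ 2 := by
    rw [hAB, Matrix.mul_assoc, Matrix.mul_assoc, hCAi, hDminv]
    simp [Matrix.trace, Matrix.diag, Matrix.mul_apply, Finset.mul_sum, sq, mul_comm,
      mul_assoc, mul_left_comm]
  have htr3 : Matrix.trace (Dm⁻¹) = s⁻¹ := by
    simp [hDminv, Matrix.trace, Matrix.diag]
  rw [htr2, htr3, hkey]
  field_simp
  ring
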